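/- arXiv:2105.03793 — 4 statements merged into one kernel-verified Lean document; each statement's English description precedes it below -/
import Mathlib

section
/- Let f : W × V → ℝ be ρ-strongly-convex-strongly-concave (ρ ≥ 0) and differentiable, with ‖∇_w f(w,v)‖ ≤ G and ‖∇_v f(w,v)‖ ≤ G for all w,v. Then for any step size η > 0, ‖(w - η∇_w f(w,v)) - (w' - η∇_w f(w',v'))‖² + ‖(v + η∇_v f(w,v)) - (v' + η∇_v f(w',v'))‖² ≤ (1 - 2ρη)(‖w-w'‖² + ‖v-v'‖²) + 8G²η². -/
open scoped RealInnerProductSpace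

/-- Approximate expansiveness of the gradient descent-ascent map for ρ-SC-SC Lipschitz
functions: squared distance contracts by (1-2ρη) up to an additive 8G²η² term. -/
theorem gda_map_scsc_lipschitz_expansiveness
    {E F : Type*} [NormedAddCommGroup E] [InnerProductSpace ℝ E] [CompleteSpace E]
    [NormedAddCommGroup F] [InnerProductSpace ℝ F] [CompleteSpace F]
    (f : E → F → ℝ) (gw : E → F → E) (gv : E → F → F) (ρ G η : ℝ)
    (hρ : 0 ≤ ρ) (hη : 0 < η)
    (hgw : ∀ w v, HasGradientAt (fun w' => f w' v) (gw w v) w)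
    (hgv : ∀ w v, HasGradientAt (fun v' => f w v') (gv w v) v)
    (hsc : ∀ v w w', f w' v + ⟪w - w', gw w' v⟫ + ρ / 2 * ‖w - w'‖ ^ 2 ≤ f w v)
    (hscc : ∀ w v v', f w v ≤ f w v' + ⟪v - v', gv w v'⟫ - ρ / 2 * ‖v - v'‖ ^ 2)
    (hGw : ∀ w v, ‖gw w v‖ ≤ G) (hGv : ∀ w v, ‖gv w v‖ ≤ G) :
    ∀ w w' v v',
      ‖(w - η • gw w v) - (w' - η • gw w' v')‖ ^ 2 +
          ‖(v + η • gv w v) - (v' + η • gv w' v')‖ ^ 2 ≤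
        (1 - 2 * ρ * η) * (‖w - w'‖ ^ 2 + ‖v - v'‖ ^ 2) + 8 * G ^ 2 * η ^ 2 := by
  intro w w' v v'
  have hG0 : 0 ≤ G := le_trans (norm_nonneg _) (hGw w v)
  set a := gw w v with ha
  set b := gw w' v' with hb
  set c := gv w v with hc
  set d := gv w' v' with hd
  have key : ρ * (‖w - w'‖ ^ 2 + ‖v - v'‖ ^ 2) ≤
      ⟪w - w', a - b⟫ - ⟪v - v', c - d⟫ := by
    have h1 := hsc v w' w
    have h2 := hsc v' w w'
    have h3 := hscc w v' v
    have h4 := hscc w' v v'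
    have e1 : ⟪w' - w, a⟫ = -⟪w - w', a⟫ := by rw [← neg_sub, inner_neg_left]
    have e2 : ⟪v' - v, c⟫ = -⟪v - v', c⟫ := by rw [← neg_sub, inner_neg_left]
    have e3 : ‖w' - w‖ = ‖w - w'‖ := norm_sub_rev _ _
    have e4 : ‖v' - v‖ = ‖v - v'‖ := norm_sub_rev _ _
    rw [e1, e3] at h1
    rw [e2, e4] at h3
    rw [inner_sub_right, inner_sub_right]
    linarith
  have hab : ‖a - b‖ ≤ 2 * G := by
    calc ‖a - b‖ ≤ ‖a‖ + ‖b‖ := norm_sub_le _ _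
    _ ≤ 2 * G := by have := hGw w v; have := hGw w' v'; rw [← ha, ← hb] at *; linarith
  have hcd : ‖c - d‖ ≤ 2 * G := by
    calc ‖c - d‖ ≤ ‖c‖ + ‖d‖ := norm_sub_le _ _
    _ ≤ 2 * G := by have := hGv w v; have := hGv w' v'; rw [← hc, ← hd] at *; linarith
  have r1 : (w - η • a) - (w' - η • b) = (w - w') - η • (a - b) := by
    rw [smul_sub]; abel
  have r2 : (v + η • c) - (v' + η • d) = (v - v') + η • (c - d) := by
    rw [smul_sub]; abel
  rw [r1, r2, norm_sub_sq_real, norm_add_sq_real, real_inner_smul_right,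
    real_inner_smul_right, norm_smul, norm_smul, Real.norm_eq_abs,
    mul_pow, mul_pow, sq_abs]
  have sq1 : ‖a - b‖ ^ 2 ≤ (2 * G) ^ 2 := by
    apply pow_le_pow_left₀ (norm_nonneg _) hab
  have sq2 : ‖c - d‖ ^ 2 ≤ (2 * G) ^ 2 := by
    apply pow_le_pow_left₀ (norm_nonneg _) hcd
  nlinarith [mul_le_mul_of_nonneg_left key (le_of_lt hη), sq_nonneg η, hη.le]
end

section
/- Let f : W × V → ℝ be convex-concave, differentiable, and L-smooth, meaning ‖(∇_w f(w,v) - ∇_w f(w',v'), ∇_v f(w,v) - ∇_v f(w',v'))‖ ≤ L‖(w-w', v-v')‖ for all (w,v),(w',v'). Then for any η > 0, ‖(w - η∇_w f(w,v)) - (w' - η∇_w f(w',v'))‖² + ‖(v + η∇_v f(w,v)) - (v' + η∇_v f(w',v'))‖² ≤ (1 + L²η²)(‖w-w'‖² + ‖v-v'‖²). -/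
open scoped RealInnerProductSpace

/-- Gradient inequality for convex functions on the whole space. -/
lemma convexOn_grad_ineq {E : Type*} [NormedAddCommGroup E] [InnerProductSpace ℝ E]
    [CompleteSpace E] {g : E → ℝ} {x g' : E}
    (hc : ConvexOn ℝ Set.univ g) (hg : HasGradientAt g g' x) (y : E) :
    g x + ⟪g', y - x⟫ ≤ g y := by
  set φ : ℝ → ℝ := fun t => g (AffineMap.lineMap x y t) with hφ_def
  have hder : HasDerivAt φ ⟪g', y - x⟫ 0 := by
    have hf : HasFDerivAt g (InnerProductSpace.toDual ℝ E g') (AffineMap.lineMap x y (0:ℝ)) := by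
      simpa using (hasGradientAt_iff_hasFDerivAt).mp hg
    have hcd : HasDerivAt (fun t : ℝ => AffineMap.lineMap x y t) (y - x) 0 := by
      have h : (fun t : ℝ => (AffineMap.lineMap x y t : E)) = fun t => t • (y - x) + x := by
        funext t
        simp only [AffineMap.lineMap_apply_module]
        module
      rw [h]
      simpa using ((hasDerivAt_id (0:ℝ)).smul_const (y - x)).add_const x
    have := hf.comp_hasDerivAt 0 hcd
    simpa [InnerProductSpace.toDual_apply_apply, Function.comp_def, hφ_def] using this
  have hφc : ConvexOn ℝ Set.univ φ := by
    have := hc.comp_affineMap (AffineMap.lineMap x y)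
    simpa [Function.comp_def, hφ_def] using this
  have := hφc.le_slope_of_hasDerivAt (Set.mem_univ (0:ℝ)) (Set.mem_univ (1:ℝ))
    one_pos hder
  have h1 : φ 1 = g y := by simp [hφ_def]
  have h0 : φ 0 = g x := by simp [hφ_def]
  simp only [slope_def_field, h0, h1, div_one, sub_zero] at this
  linarith

/-- Monotonicity of the convex-concave saddle operator. -/
lemma saddle_monotone {E F : Type*} [NormedAddCommGroup E] [InnerProductSpace ℝ E]
    [CompleteSpace E] [NormedAddCommGroup F] [InnerProductSpace ℝ F] [CompleteSpace F]
    (f : E → F → ℝ) (gw : E → F → E) (gv : E → F → F)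
    (hconv : ∀ v, ConvexOn ℝ Set.univ (fun w => f w v))
    (hconc : ∀ w, ConcaveOn ℝ Set.univ (fun v => f w v))
    (hgw : ∀ w v, HasGradientAt (fun w' => f w' v) (gw w v) w)
    (hgv : ∀ w v, HasGradientAt (fun v' => f w v') (gv w v) v)
    (w w' : E) (v v' : F) :
    0 ≤ ⟪gw w v - gw w' v', w - w'⟫ - ⟪gv w v - gv w' v', v - v'⟫ := by
  have h1 := convexOn_grad_ineq (hconv v) (hgw w v) w'
  have h2 := convexOn_grad_ineq (hconv v') (hgw w' v') w
  have hneg : ∀ (a : E) (b : F), HasGradientAt (-fun v0 => f a v0) (-(gv a b)) b := by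
    intro a b
    rw [hasGradientAt_iff_hasFDerivAt, map_neg]
    exact ((hasGradientAt_iff_hasFDerivAt).mp (hgv a b)).neg
  have h3 := convexOn_grad_ineq (hconc w).neg (hneg w v) v'
  have h4 := convexOn_grad_ineq (hconc w').neg (hneg w' v') v
  simp only [Pi.neg_apply, inner_neg_left] at h3 h4
  have e1 : ⟪gw w v - gw w' v', w - w'⟫ = ⟪gw w v, w - w'⟫ - ⟪gw w' v', w - w'⟫ := by
    rw [inner_sub_left]
  have e2 : ⟪gv w v - gv w' v', v - v'⟫ = ⟪gv w v, v - v'⟫ - ⟪gv w' v', v - v'⟫ := by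
    rw [inner_sub_left]
  have e3 : ⟪gw w v, w' - w⟫ = -⟪gw w v, w - w'⟫ := by
    rw [← inner_neg_right]; rw [neg_sub]
  have e4 : ⟪gw w' v', w - w'⟫ = ⟪gw w' v', w - w'⟫ := rfl
  have e5 : ⟪gv w v, v' - v⟫ = -⟪gv w v, v - v'⟫ := by
    rw [← inner_neg_right]; rw [neg_sub]
  have e6 : ⟪gv w' v', v - v'⟫ = ⟪gv w' v', v - v'⟫ := rfl
  rw [e3] at h1
  rw [e5] at h3
  have e7 : ⟪gv w' v', v' - v⟫ = -⟪gv w' v', v - v'⟫ := by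
    rw [← inner_neg_right]; rw [neg_sub]
  rw [e1, e2]
  linarith

/-- Approximate nonexpansiveness of the gradient descent-ascent map for convex-concave
L-smooth functions. -/
theorem gda_map_convex_concave_smooth_nonexpansive
    {E F : Type*} [NormedAddCommGroup E] [InnerProductSpace ℝ E] [CompleteSpace E]
    [NormedAddCommGroup F] [InnerProductSpace ℝ F] [CompleteSpace F]
    (f : E → F → ℝ) (gw : E → F → E) (gv : E → F → F) (L η : ℝ)
    (hL : 0 ≤ L) (hη : 0 < η)
    (hconv : ∀ v, ConvexOn ℝ Set.univ (fun w => f w v))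
    (hconc : ∀ w, ConcaveOn ℝ Set.univ (fun v => f w v))
    (hgw : ∀ w v, HasGradientAt (fun w' => f w' v) (gw w v) w)
    (hgv : ∀ w v, HasGradientAt (fun v' => f w v') (gv w v) v)
    (hsmooth : ∀ w v w' v',
      ‖gw w v - gw w' v'‖ ^ 2 + ‖gv w v - gv w' v'‖ ^ 2 ≤
        L ^ 2 * (‖w - w'‖ ^ 2 + ‖v - v'‖ ^ 2)) :
    ∀ w w' v v',
      ‖(w - η • gw w v) - (w' - η • gw w' v')‖ ^ 2 +
          ‖(v + η • gv w v) - (v' + η • gv w' v')‖ ^ 2 ≤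
        (1 + L ^ 2 * η ^ 2) * (‖w - w'‖ ^ 2 + ‖v - v'‖ ^ 2) := by
  intro w w' v v'
  have hmono := saddle_monotone f gw gv hconv hconc hgw hgv w w' v v'
  have hsm := hsmooth w v w' v'
  have hw : (w - η • gw w v) - (w' - η • gw w' v') = (w - w') - η • (gw w v - gw w' v') := by
    rw [smul_sub]; abel
  have hv : (v + η • gv w v) - (v' + η • gv w' v') = (v - v') + η • (gv w v - gv w' v') := by
    rw [smul_sub]; abel
  rw [hw, hv]
  have nw : ‖(w - w') - η • (gw w v - gw w' v')‖ ^ 2 =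
      ‖w - w'‖ ^ 2 - 2 * η * ⟪gw w v - gw w' v', w - w'⟫ + η ^ 2 * ‖gw w v - gw w' v'‖ ^ 2 := by
    rw [norm_sub_sq_real, inner_smul_right, norm_smul, real_inner_comm]
    rw [mul_pow, Real.norm_eq_abs, sq_abs]
    ring
  have nv : ‖(v - v') + η • (gv w v - gv w' v')‖ ^ 2 =
      ‖v - v'‖ ^ 2 + 2 * η * ⟪gv w v - gv w' v', v - v'⟫ + η ^ 2 * ‖gv w v - gv w' v'‖ ^ 2 := by
    rw [norm_add_sq_real, inner_smul_right, norm_smul, real_inner_comm]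
    rw [mul_pow, Real.norm_eq_abs, sq_abs]
    ring
  rw [nw, nv]
  have hη2 : (0:ℝ) ≤ η ^ 2 := sq_nonneg η
  nlinarith [sq_nonneg η, mul_le_mul_of_nonneg_left hsm hη2]
end

section
/- Let f be ρ-weakly-convex-weakly-concave, differentiable, with gradients bounded: ‖∇_w f(w,v)‖ ≤ G and ‖∇_v f(w,v)‖ ≤ G. Then for any η > 0, ‖(w - η∇_w f(w,v)) - (w' - η∇_w f(w',v'))‖² + ‖(v + η∇_v f(w,v)) - (v' + η∇_v f(w',v'))‖² ≤ (1 + 2ηρ)(‖w-w'‖² + ‖v-v'‖²) + 8G²η². -/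
open scoped RealInnerProductSpace

open Set Filter Topology

section Aux

variable {E : Type*} [NormedAddCommGroup E] [InnerProductSpace ℝ E] [CompleteSpace E]

lemma aux_hasGradientAt_add {g h : E → ℝ} {g' h' : E} {x : E}
    (hg : HasGradientAt g g' x) (hh : HasGradientAt h h' x) :
    HasGradientAt (fun y => g y + h y) (g' + h') x := by
  have := hg.hasFDerivAt.add hh.hasFDerivAt
  rwa [hasGradientAt_iff_hasFDerivAt, map_add]

lemma aux_hasGradientAt_sub {g h : E → ℝ} {g' h' : E} {x : E}
    (hg : HasGradientAt g g' x) (hh : HasGradientAt h h' x) :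
    HasGradientAt (fun y => g y - h y) (g' - h') x := by
  have := hg.hasFDerivAt.sub hh.hasFDerivAt
  rwa [hasGradientAt_iff_hasFDerivAt, map_sub]

lemma aux_hasGradientAt_half_sq (c : ℝ) (x : E) :
    HasGradientAt (fun y : E => c / 2 * ‖y‖ ^ 2) (c • x) x := by
  have h1 : HasFDerivAt (fun y : E => ‖y‖ ^ 2) (2 • (innerSL ℝ x)) x :=
    (hasStrictFDerivAt_norm_sq x).hasFDerivAt
  have h2 := h1.const_smul (c / 2)
  have h3 : HasFDerivAt (fun y : E => c / 2 * ‖y‖ ^ 2)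
      ((c / 2) • (2 • (innerSL ℝ x))) x := by
    exact h2
  rw [hasGradientAt_iff_hasFDerivAt]
  refine HasFDerivAt.congr_fderiv h3 ?_
  ext y
  simp [InnerProductSpace.toDual_apply_apply, real_inner_smul_left]
  ring

/-- The basic gradient inequality for a convex function. -/
lemma aux_convex_grad_ineq {g : E → ℝ} (hg : ConvexOn ℝ Set.univ g) {x gx : E}
    (h : HasGradientAt g gx x) (y : E) :
    g x + ⟪gx, y - x⟫ ≤ g y := by
  have hline : HasDerivAt (fun t : ℝ => x + t • (y - x)) (y - x) 0 := by
    simpa using ((hasDerivAt_id (0 : ℝ)).smul_const (y - x)).const_add x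
  have hfd : HasFDerivAt g (InnerProductSpace.toDual ℝ E gx) (x + (0 : ℝ) • (y - x)) := by
    simpa using h.hasFDerivAt
  have hcomp : HasDerivAt (fun t : ℝ => g (x + t • (y - x))) ⟪gx, y - x⟫ 0 := by
    have := hfd.comp_hasDerivAt 0 hline
    simp only [InnerProductSpace.toDual_apply_apply] at this
    exact this
  have hslope : Tendsto (slope (fun t : ℝ => g (x + t • (y - x))) 0) (𝓝[>] 0)
      (𝓝 ⟪gx, y - x⟫) :=
    (hasDerivAt_iff_tendsto_slope.1 hcomp).mono_left
      (nhdsWithin_mono _ fun t ht => ne_of_gt ht)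
  have key : ⟪gx, y - x⟫ ≤ g y - g x := by
    refine le_of_tendsto hslope ?_
    filter_upwards [Ioc_mem_nhdsGT_of_mem (Set.mem_Ico.2 ⟨le_refl (0:ℝ), zero_lt_one⟩)]
      with t ht
    have hconv := hg.2 (Set.mem_univ x) (Set.mem_univ y)
      (by linarith [ht.2] : (0:ℝ) ≤ 1 - t) ht.1.le (by ring)
    have hxt : x + t • (y - x) = (1 - t) • x + t • y := by
      rw [smul_sub, sub_smul, one_smul]; abel
    have hval : g (x + t • (y - x)) ≤ (1 - t) * g x + t * g y := by
      rw [hxt]; exact hconv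
    have ht0 : (0:ℝ) < t := ht.1
    rw [slope_def_field]
    simp only [zero_smul, add_zero, sub_zero]
    rw [div_le_iff₀ ht0]
    nlinarith [hval]
  linarith

end Aux

set_option maxHeartbeats 1000000 in
/-- Expansiveness of the gradient descent-ascent map for ρ-weakly-convex-weakly-concave
functions with G-bounded gradients. -/
theorem gda_map_wcwc_expansiveness
    {E F : Type*} [NormedAddCommGroup E] [InnerProductSpace ℝ E] [CompleteSpace E]
    [NormedAddCommGroup F] [InnerProductSpace ℝ F] [CompleteSpace F]
    (f : E → F → ℝ) (gw : E → F → E) (gv : E → F → F) (ρ G η : ℝ)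
    (hρ : 0 ≤ ρ) (hη : 0 < η)
    (hconv : ∀ v, ConvexOn ℝ Set.univ (fun w => f w v + ρ / 2 * ‖w‖ ^ 2))
    (hconc : ∀ w, ConcaveOn ℝ Set.univ (fun v => f w v - ρ / 2 * ‖v‖ ^ 2))
    (hgw : ∀ w v, HasGradientAt (fun w' => f w' v) (gw w v) w)
    (hgv : ∀ w v, HasGradientAt (fun v' => f w v') (gv w v) v)
    (hGw : ∀ w v, ‖gw w v‖ ≤ G) (hGv : ∀ w v, ‖gv w v‖ ≤ G) :
    ∀ w w' v v',
      ‖(w - η • gw w v) - (w' - η • gw w' v')‖ ^ 2 +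
          ‖(v + η • gv w v) - (v' + η • gv w' v')‖ ^ 2 ≤
        (1 + 2 * η * ρ) * (‖w - w'‖ ^ 2 + ‖v - v'‖ ^ 2) + 8 * G ^ 2 * η ^ 2 := by
  intro w w' v v'
  -- gradients of the regularized functions
  have Hw : ∀ (w0 : E) (v0 : F),
      HasGradientAt (fun w1 => f w1 v0 + ρ / 2 * ‖w1‖ ^ 2) (gw w0 v0 + ρ • w0) w0 :=
    fun w0 v0 => aux_hasGradientAt_add (hgw w0 v0) (aux_hasGradientAt_half_sq ρ w0)
  have Hv : ∀ (w0 : E) (v0 : F),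
      HasGradientAt (fun v1 => ρ / 2 * ‖v1‖ ^ 2 - f w0 v1) (ρ • v0 - gv w0 v0) v0 :=
    fun w0 v0 => aux_hasGradientAt_sub (aux_hasGradientAt_half_sq ρ v0) (hgv w0 v0)
  have hconc2 : ∀ w0 : E, ConvexOn ℝ Set.univ (fun v1 => ρ / 2 * ‖v1‖ ^ 2 - f w0 v1) := by
    intro w0
    have := (hconc w0).neg
    have heq : (-fun v1 => (f w0 v1 - ρ / 2 * ‖v1‖ ^ 2)) =
        (fun v1 : F => ρ / 2 * ‖v1‖ ^ 2 - f w0 v1) := by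
      funext v1; simp
    rwa [heq] at this
  -- the four gradient inequalities
  have h1 := aux_convex_grad_ineq (hconv v) (Hw w v) w'
  have h2 := aux_convex_grad_ineq (hconv v') (Hw w' v') w
  have h3 := aux_convex_grad_ineq (hconc2 w) (Hv w v) v'
  have h4 := aux_convex_grad_ineq (hconc2 w') (Hv w' v') v
  set a : E := gw w v - gw w' v' with ha
  set b : F := gv w v - gv w' v' with hb
  -- monotonicity of the (regularized) saddle operator
  have hm : 0 ≤ ⟪a, w - w'⟫ - ⟪b, v - v'⟫ + ρ * (‖w - w'‖ ^ 2 + ‖v - v'‖ ^ 2) := by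
    have e1 : ⟪gw w v + ρ • w, w' - w⟫ + ⟪gw w' v' + ρ • w', w - w'⟫ =
        -(⟪a, w - w'⟫ + ρ * ‖w - w'‖ ^ 2) := by
      have hZ : a + ρ • (w - w') = (gw w v + ρ • w) - (gw w' v' + ρ • w') := by
        rw [ha, smul_sub]; abel
      have h5 : (⟪a, w - w'⟫ : ℝ) + ρ * ‖w - w'‖ ^ 2 =
          ⟪gw w v + ρ • w, w - w'⟫ - ⟪gw w' v' + ρ • w', w - w'⟫ := by
        rw [← inner_sub_left, ← hZ, inner_add_left, real_inner_smul_left,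
          real_inner_self_eq_norm_sq]
      have e : (⟪gw w v + ρ • w, w' - w⟫ : ℝ) = -⟪gw w v + ρ • w, w - w'⟫ := by
        rw [show w' - w = -(w - w') by abel, inner_neg_right]
      rw [e, h5]; ring
    have e2 : ⟪ρ • v - gv w v, v' - v⟫ + ⟪ρ • v' - gv w' v', v - v'⟫ =
        -(-⟪b, v - v'⟫ + ρ * ‖v - v'‖ ^ 2) := by
      have hZ : -b + ρ • (v - v') = (ρ • v - gv w v) - (ρ • v' - gv w' v') := by
        rw [hb, smul_sub]; abel
      have h5 : (-⟪b, v - v'⟫ : ℝ) + ρ * ‖v - v'‖ ^ 2 =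
          ⟪ρ • v - gv w v, v - v'⟫ - ⟪ρ • v' - gv w' v', v - v'⟫ := by
        rw [← inner_sub_left, ← hZ, inner_add_left, real_inner_smul_left,
          real_inner_self_eq_norm_sq, inner_neg_left]
      have e : (⟪ρ • v - gv w v, v' - v⟫ : ℝ) = -⟪ρ • v - gv w v, v - v'⟫ := by
        rw [show v' - v = -(v - v') by abel, inner_neg_right]
      rw [e, h5]; ring
    nlinarith [h1, h2, h3, h4, e1, e2]
  -- bounds on the gradient differences
  have hG0 : 0 ≤ G := le_trans (norm_nonneg _) (hGw w v)
  have hna : ‖a‖ ≤ 2 * G := by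
    calc ‖a‖ ≤ ‖gw w v‖ + ‖gw w' v'‖ := norm_sub_le _ _
    _ ≤ 2 * G := by linarith [hGw w v, hGw w' v']
  have hnb : ‖b‖ ≤ 2 * G := by
    calc ‖b‖ ≤ ‖gv w v‖ + ‖gv w' v'‖ := norm_sub_le _ _
    _ ≤ 2 * G := by linarith [hGv w v, hGv w' v']
  have ha2 : ‖a‖ ^ 2 ≤ 4 * G ^ 2 := by nlinarith [norm_nonneg a]
  have hb2 : ‖b‖ ^ 2 ≤ 4 * G ^ 2 := by nlinarith [norm_nonneg b]
  -- rewrite the two displacement norms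
  have e1 : (w - η • gw w v) - (w' - η • gw w' v') = (w - w') - η • a := by
    rw [ha, smul_sub]; abel
  have e2 : (v + η • gv w v) - (v' + η • gv w' v') = (v - v') + η • b := by
    rw [hb, smul_sub]; abel
  have n1 : ‖(w - w') - η • a‖ ^ 2 =
      ‖w - w'‖ ^ 2 - 2 * (η * ⟪a, w - w'⟫) + η ^ 2 * ‖a‖ ^ 2 := by
    rw [norm_sub_sq_real, real_inner_smul_right, real_inner_comm (w - w') a, norm_smul,
      Real.norm_eq_abs, mul_pow, sq_abs]
  have n2 : ‖(v - v') + η • b‖ ^ 2 =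
      ‖v - v'‖ ^ 2 + 2 * (η * ⟪b, v - v'⟫) + η ^ 2 * ‖b‖ ^ 2 := by
    rw [norm_add_sq_real, real_inner_smul_right, real_inner_comm (v - v') b, norm_smul,
      Real.norm_eq_abs, mul_pow, sq_abs]
  rw [e1, e2, n1, n2]
  have k1 : η ^ 2 * ‖a‖ ^ 2 ≤ η ^ 2 * (4 * G ^ 2) :=
    mul_le_mul_of_nonneg_left ha2 (sq_nonneg η)
  have k2 : η ^ 2 * ‖b‖ ^ 2 ≤ η ^ 2 * (4 * G ^ 2) :=
    mul_le_mul_of_nonneg_left hb2 (sq_nonneg η)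
  have k3 : 0 ≤ 2 * η * (⟪a, w - w'⟫ - ⟪b, v - v'⟫ + ρ * (‖w - w'‖ ^ 2 + ‖v - v'‖ ^ 2)) :=
    mul_nonneg (by linarith) hm
  nlinarith [k1, k2, k3]
end

section
/- Let η_t = 1/(ρ t) with ρ > 0, and let a_t ≥ 0 satisfy a_1 = 0 and a_{t+1} ≤ (1 - ρ η_t) a_t + 8G²η_t(η_t + 1/(n(n-2)ρ)) for all t ≥ 1. Then a_{t+1} ≤ (8G²/ρ²)(log(e t)/t + 1/(n(n-2))). -/
/-- Stability recursion for SGDA on strongly-convex-strongly-concave nonsmooth problems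
with step sizes η_t = 1/(ρt). -/
theorem sgda_scsc_stability_recursion
    (a : ℕ → ℝ) (η : ℕ → ℝ) (ρ G n : ℝ)
    (hρ : 0 < ρ) (hG : 0 < G) (hn : 2 < n)
    (hη : ∀ t : ℕ, 1 ≤ t → η t = 1 / (ρ * t))
    (ha1 : a 1 = 0) (hnn : ∀ t, 0 ≤ a t)
    (hrec : ∀ t : ℕ, 1 ≤ t →
      a (t + 1) ≤ (1 - ρ * η t) * a t + 8 * G ^ 2 * η t * (η t + 1 / (n * (n - 2) * ρ))) :
    ∀ t : ℕ, 1 ≤ t →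
      a (t + 1) ≤ 8 * G ^ 2 / ρ ^ 2 * (Real.log (Real.exp 1 * t) / t + 1 / (n * (n - 2))) := by
  set C : ℝ := 8 * G ^ 2 / ρ ^ 2 with hC
  set m : ℝ := n * (n - 2) with hm
  have hm0 : 0 < m := mul_pos (by linarith) (by linarith)
  have hC0 : 0 < C := by positivity
  -- simplified recursion
  have hrec' : ∀ t : ℕ, 1 ≤ t →
      a (t + 1) ≤ (1 - 1 / t) * a t + C * (1 / t) * (1 / t + 1 / m) := by
    intro t ht
    have ht0 : (0 : ℝ) < t := by exact_mod_cast ht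
    have := hrec t ht
    rw [hη t ht] at this
    have h1 : ρ * (1 / (ρ * t)) = 1 / t := by field_simp
    have h2 : 8 * G ^ 2 * (1 / (ρ * t)) * (1 / (ρ * t) + 1 / (m * ρ))
        = C * (1 / t) * (1 / t + 1 / m) := by
      rw [hC]; field_simp
    rw [h1, h2] at this
    exact this
  -- key induction
  have key : ∀ t : ℕ, 1 ≤ t → a (t + 1) ≤ C * ((harmonic t : ℝ) + t / m) / t := by
    intro t ht
    induction t, ht using Nat.le_induction with
    | base =>
      have := hrec' 1 le_rfl
      simp only [Nat.cast_one, ha1] at this ⊢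
      simp only [harmonic_succ, harmonic_zero] at *
      push_cast at this ⊢
      linarith
    | succ t ht ih =>
      have ht0 : (0 : ℝ) < t := by exact_mod_cast ht
      have ht1 : (0 : ℝ) < (t : ℝ) + 1 := by linarith
      have h := hrec' (t + 1) (by omega)
      push_cast at h ⊢
      have hfac : (0 : ℝ) ≤ 1 - 1 / ((t : ℝ) + 1) := by
        rw [sub_nonneg, div_le_one ht1]; linarith
      have h2 : (1 - 1 / ((t : ℝ) + 1)) * a (t + 1)
          ≤ (1 - 1 / ((t : ℝ) + 1)) * (C * ((harmonic t : ℝ) + t / m) / t) :=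
        mul_le_mul_of_nonneg_left ih hfac
      have h3 : (1 - 1 / ((t : ℝ) + 1)) * (C * ((harmonic t : ℝ) + t / m) / t)
          = C * ((harmonic t : ℝ) + t / m) / (t + 1) := by
        field_simp; ring
      have hHar : ((harmonic (t + 1) : ℚ) : ℝ) = (harmonic t : ℝ) + 1 / ((t : ℝ) + 1) := by
        rw [harmonic_succ]; push_cast; ring
      rw [hHar]
      have h4 : C * ((harmonic t : ℝ) + t / m) / (t + 1)
          + C * (1 / ((t : ℝ) + 1)) * (1 / ((t : ℝ) + 1) + 1 / m)
          = C * ((harmonic t : ℝ) + 1 / ((t : ℝ) + 1) + ((t : ℝ) + 1) / m) / ((t : ℝ) + 1) := by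
        field_simp; ring
      calc a (t + 1 + 1) ≤ _ := h
        _ ≤ C * ((harmonic t : ℝ) + t / m) / (t + 1)
            + C * (1 / ((t : ℝ) + 1)) * (1 / ((t : ℝ) + 1) + 1 / m) := by linarith
        _ = _ := h4
  intro t ht
  have ht0 : (0 : ℝ) < t := by exact_mod_cast ht
  refine (key t ht).trans ?_
  have hlog : Real.log (Real.exp 1 * t) = 1 + Real.log t := by
    rw [Real.log_mul (Real.exp_ne_zero 1) (ne_of_gt ht0), Real.log_exp]
  rw [hlog]
  have hH : (harmonic t : ℝ) ≤ 1 + Real.log t := harmonic_le_one_add_log t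
  have hmain : C * ((harmonic t : ℝ) + t / m) / t ≤ C * ((1 + Real.log t) + t / m) / t := by
    gcongr
  refine hmain.trans (le_of_eq ?_)
  field_simp
end
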